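/- arXiv:1402.3851 — 2 statements merged into one kernel-verified Lean document; each statement's English description precedes it below -/
import Mathlib

section
/- Let G be a weighted graph on n ≥ 2 vertices, let α ≥ 1 and t ≥ 1, and let H_1, …, H_t be a t-bundle of α-spanners of G with union H. Then for every edge e = {u,v} of G that is not an edge of H, the effective resistance satisfies w_G(u,v)·R_e[G] ≤ α/t. -/
/-- A weighted graph on a finite vertex set `V`: a symmetric weight function with zero
diagonal and nonnegative weights. -/
def IsWeightedGraph {V : Type*} (w : V → V → ℝ) : Prop :=
  (∀ i j, w i j = w j i) ∧ (∀ i, w i i = 0) ∧ (∀ i j, 0 ≤ w i j)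

/-- The Laplacian quadratic form `Q_G(x) = (1/2)·Σ_{i,j} w(i,j)·(x i − x j)²`. -/
noncomputable def lapQF {V : Type*} [Fintype V] (w : V → V → ℝ) (x : V → ℝ) : ℝ :=
  (1 / 2) * ∑ i, ∑ j, w i j * (x i - x j) ^ 2

/-- `f : Fin (k+1) → V` is a path in the graph with weights `w` from `u` to `v`:
its vertices are distinct and all its edges have positive weight. -/
def IsPathIn {V : Type*} (w : V → V → ℝ) (u v : V) (k : ℕ) (f : Fin (k + 1) → V) : Prop :=
  f 0 = u ∧ f (Fin.last k) = v ∧ Function.Injective f ∧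
    ∀ i : Fin k, 0 < w (f i.castSucc) (f i.succ)

/-- The sum `Σ_{e' ∈ p} 1 / w(e')` over the edges of the path `f`. -/
noncomputable def pathRes {V : Type*} (w : V → V → ℝ) (k : ℕ) (f : Fin (k + 1) → V) : ℝ :=
  ∑ i : Fin k, (w (f i.castSucc) (f i.succ))⁻¹

/-- `H` is a subgraph of `G` carrying the same weights on a subset of the edges of `G`:
its weight function is symmetric and at every pair it either agrees with `G` or is `0`. -/
def IsSubgraph {V : Type*} (wG wH : V → V → ℝ) : Prop :=
  (∀ i j, wH i j = wH j i) ∧ (∀ i j, wH i j = wG i j ∨ wH i j = 0)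

/-- `H` is an `α`-spanner of `G`: a subgraph such that every edge `{u,v}` of `G` has
stretch at most `α` over `H`, i.e. `H` contains a `u`–`v` path `p` with
`w_G(u,v) · Σ_{e'∈p} 1/w(e') ≤ α`. -/
def IsSpanner {V : Type*} (α : ℝ) (wG wH : V → V → ℝ) : Prop :=
  IsSubgraph wG wH ∧ ∀ u v : V, 0 < wG u v →
    ∃ (k : ℕ) (f : Fin (k + 1) → V), IsPathIn wH u v k f ∧ wG u v * pathRes wH k f ≤ α

open scoped Classical in
/-- The graph obtained from `G` by deleting the edges of `H_1, …, H_{i-1}`. -/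
noncomputable def deleteBefore {V : Type*} (wG : V → V → ℝ) {t : ℕ}
    (Hs : Fin t → V → V → ℝ) (i : Fin t) : V → V → ℝ :=
  fun a b => if ∃ j, j < i ∧ Hs j a b ≠ 0 then 0 else wG a b

/-- `H_1, …, H_t` is a `t`-bundle of `α`-spanners of `G`: pairwise edge-disjoint
subgraphs of `G` such that each `H_i` is an `α`-spanner of `G` minus the edges of
`H_1, …, H_{i-1}`. -/
def IsBundle {V : Type*} (α : ℝ) (wG : V → V → ℝ) {t : ℕ}
    (Hs : Fin t → V → V → ℝ) : Prop :=
  (∀ i, IsSubgraph wG (Hs i)) ∧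
  (∀ i j, i ≠ j → ∀ a b, Hs i a b = 0 ∨ Hs j a b = 0) ∧
  (∀ i, IsSpanner α (deleteBefore wG Hs i) (Hs i))

/-- The effective resistance between `u` and `v`:
`R_{u,v}[G] = sup { (x u − x v)² / Q_G(x) : Q_G(x) > 0 }`. -/
noncomputable def effRes {V : Type*} [Fintype V] (w : V → V → ℝ) (u v : V) : ℝ :=
  sSup {r : ℝ | ∃ x : V → ℝ, 0 < lapQF w x ∧ r = (x u - x v) ^ 2 / lapQF w x}

/-!
For a potential `x`, telescoping along a `u`–`v` path `p` and Cauchy–Schwarz give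
`(x u - x v)² ≤ (Σ_{e ∈ p} 1 / w(e)) · Q_p(x)`, so a path of stretch at most `α` in `H_i` yields
`w_G(u,v) (x u - x v)² ≤ α Q_{H_i}(x)`. An edge outside `H` is never deleted, so every `H_i`
supplies such a path; summing over the `t` edge-disjoint `H_i`, whose union is a subgraph of `G`,
gives `t w_G(u,v) (x u - x v)² ≤ α Q_G(x)`, which bounds the supremum defining `R_e[G]`.
-/

open Finset

theorem Fin.sum_univ_castSucc_sub_succ {M : Type*} [AddCommGroup M] {k : ℕ}
    (y : Fin (k + 1) → M) : ∑ i : Fin k, (y i.castSucc - y i.succ) = y 0 - y (Fin.last k) := by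
  induction k with
  | zero => simp
  | succ k ih =>
    rw [Fin.sum_univ_castSucc]
    simp only [Fin.succ_castSucc]
    rw [ih (fun j => y j.castSucc), Fin.castSucc_zero, Fin.succ_last]
    abel

section LaplacianForm

variable {V : Type*} [Fintype V]

lemma lapQF_nonneg {w : V → V → ℝ} (hw : ∀ a b, 0 ≤ w a b) (x : V → ℝ) : 0 ≤ lapQF w x := by
  unfold lapQF
  have := sum_nonneg fun a (_ : a ∈ univ) =>
    sum_nonneg fun b (_ : b ∈ univ) => mul_nonneg (hw a b) (sq_nonneg (x a - x b))
  linarith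

lemma lapQF_mono {w w' : V → V → ℝ} (h : ∀ a b, w a b ≤ w' a b) (x : V → ℝ) :
    lapQF w x ≤ lapQF w' x := by
  unfold lapQF
  gcongr with a _ b _
  exact h a b

lemma lapQF_sum {ι : Type*} (s : Finset ι) (w : ι → V → V → ℝ) (x : V → ℝ) :
    lapQF (∑ i ∈ s, w i : V → V → ℝ) x = ∑ i ∈ s, lapQF (w i) x := by
  simp only [lapQF, ← mul_sum, Finset.sum_apply, sum_mul]
  rw [sum_comm (s := s)]
  refine congrArg _ (sum_congr rfl fun a _ => ?_)
  rw [sum_comm]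

/-- An injective path traverses each edge in at most one direction, so its edges and their
reversals are distinct ordered pairs; as `lapQF` halves the sum over all ordered pairs, the path
edges contribute at most `lapQF w x`. -/
lemma sum_path_edges_le_lapQF {w : V → V → ℝ} (hsym : ∀ a b, w a b = w b a)
    (hw : ∀ a b, 0 ≤ w a b) {k : ℕ} {f : Fin (k + 1) → V} (hf : Function.Injective f)
    (x : V → ℝ) :
    ∑ i : Fin k, w (f i.castSucc) (f i.succ) * (x (f i.castSucc) - x (f i.succ)) ^ 2
      ≤ lapQF w x := by
  classical
  let F : V × V → ℝ := fun p => w p.1 p.2 * (x p.1 - x p.2) ^ 2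
  let E : Fin k ⊕ Fin k → V × V
    | .inl i => (f i.castSucc, f i.succ)
    | .inr i => (f i.succ, f i.castSucc)
  have hE : Function.Injective E := by
    rintro (a | a) (b | b) hab <;> simp only [E, Prod.mk.injEq] at hab
    · exact congrArg _ (Fin.castSucc_injective _ (hf hab.1))
    · have h1 := congrArg Fin.val (hf hab.1)
      have h2 := congrArg Fin.val (hf hab.2)
      simp only [Fin.val_castSucc, Fin.val_succ] at h1 h2
      omega
    · have h1 := congrArg Fin.val (hf hab.1)
      have h2 := congrArg Fin.val (hf hab.2)
      simp only [Fin.val_castSucc, Fin.val_succ] at h1 h2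
      omega
    · exact congrArg _ (Fin.succ_injective _ (hf hab.1))
  have hsum : ∑ s, F (E s) ≤ ∑ p, F p := by
    refine (sum_map univ ⟨E, hE⟩ F).symm.le.trans ?_
    exact sum_le_univ_sum_of_nonneg fun p => mul_nonneg (hw _ _) (sq_nonneg _)
  have hrev : ∀ a b, F (b, a) = F (a, b) := fun a b => by
    simp only [F, hsym b a]
    ring
  rw [Fintype.sum_sum_type, Fintype.sum_prod_type] at hsum
  simp only [E, hrev] at hsum
  unfold lapQF
  linarith

end LaplacianForm

section Resistance

variable {V : Type*} [Fintype V]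

lemma sq_sub_le_pathRes_mul_lapQF {w : V → V → ℝ} (hsym : ∀ a b, w a b = w b a)
    (hw : ∀ a b, 0 ≤ w a b) {u v : V} {k : ℕ} {f : Fin (k + 1) → V}
    (hp : IsPathIn w u v k f) (x : V → ℝ) :
    (x u - x v) ^ 2 ≤ pathRes w k f * lapQF w x := by
  obtain ⟨rfl, rfl, hinj, hpos⟩ := hp
  calc (x (f 0) - x (f (Fin.last k))) ^ 2
      = (∑ i : Fin k, (x (f i.castSucc) - x (f i.succ))) ^ 2 :=
        congrArg (· ^ 2) (Fin.sum_univ_castSucc_sub_succ (x ∘ f)).symm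
    _ ≤ pathRes w k f *
          ∑ i : Fin k, w (f i.castSucc) (f i.succ) * (x (f i.castSucc) - x (f i.succ)) ^ 2 :=
        sum_sq_le_sum_mul_sum_of_sq_le_mul _ (fun i _ => (inv_pos.2 (hpos i)).le)
          (fun i _ => mul_nonneg (hpos i).le (sq_nonneg _))
          (fun i _ => by rw [inv_mul_cancel_left₀ (hpos i).ne'])
    _ ≤ pathRes w k f * lapQF w x :=
        mul_le_mul_of_nonneg_left (sum_path_edges_le_lapQF hsym hw hinj x)
          (sum_nonneg fun i _ => (inv_pos.2 (hpos i)).le)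

lemma effRes_le_of_forall_sq_sub_le {w : V → V → ℝ} {u v : V} {C : ℝ} (hC : 0 ≤ C)
    (h : ∀ x : V → ℝ, (x u - x v) ^ 2 ≤ C * lapQF w x) : effRes w u v ≤ C := by
  refine Real.sSup_le ?_ hC
  rintro r ⟨x, hQ, rfl⟩
  exact div_le_of_le_mul₀ hQ.le hC (h x)

lemma IsSpanner.mul_sq_sub_le {α : ℝ} {wG wH : V → V → ℝ} (hH : IsSpanner α wG wH)
    (hw : ∀ a b, 0 ≤ wH a b) {u v : V} (huv : 0 < wG u v) (x : V → ℝ) :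
    wG u v * (x u - x v) ^ 2 ≤ α * lapQF wH x := by
  obtain ⟨k, f, hp, hstretch⟩ := hH.2 u v huv
  calc wG u v * (x u - x v) ^ 2
      ≤ wG u v * (pathRes wH k f * lapQF wH x) :=
        mul_le_mul_of_nonneg_left (sq_sub_le_pathRes_mul_lapQF hH.1.1 hw hp x) huv.le
    _ = wG u v * pathRes wH k f * lapQF wH x := (mul_assoc _ _ _).symm
    _ ≤ α * lapQF wH x := mul_le_mul_of_nonneg_right hstretch (lapQF_nonneg hw x)

end Resistance

lemma deleteBefore_apply_of_forall_eq_zero {V : Type*} {wG : V → V → ℝ} {t : ℕ}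
    {Hs : Fin t → V → V → ℝ} {a b : V} (h : ∀ j, Hs j a b = 0) (i : Fin t) :
    deleteBefore wG Hs i a b = wG a b :=
  if_neg fun ⟨j, _, hj⟩ => hj (h j)

namespace IsBundle

variable {V : Type*} {α : ℝ} {wG : V → V → ℝ} {t : ℕ} {Hs : Fin t → V → V → ℝ}

lemma nonneg (hB : IsBundle α wG Hs) (hG : ∀ a b, 0 ≤ wG a b) (i : Fin t) (a b : V) :
    0 ≤ Hs i a b := by
  rcases (hB.1 i).2 a b with h | h <;> rw [h]
  exact hG a b

/-- Edge-disjointness: at most one `Hs i` carries the pair `(a, b)`. -/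
lemma sum_apply_le (hB : IsBundle α wG Hs) (hG : ∀ a b, 0 ≤ wG a b) (a b : V) :
    ∑ i, Hs i a b ≤ wG a b := by
  by_cases hall : ∀ i, Hs i a b = 0
  · rw [sum_eq_zero fun i _ => hall i]
    exact hG a b
  obtain ⟨i, hi⟩ := not_forall.1 hall
  have hsingle : ∑ j, Hs j a b = Hs i a b :=
    sum_eq_single i (fun j _ hji => (hB.2.1 j i hji a b).resolve_right hi)
      (fun h => absurd (mem_univ i) h)
  rw [hsingle, ((hB.1 i).2 a b).resolve_right hi]

lemma natCast_mul_sq_sub_le [Fintype V] (hB : IsBundle α wG Hs) (hG : ∀ a b, 0 ≤ wG a b)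
    (hα : 0 ≤ α) {u v : V} (huv : 0 < wG u v) (hout : ∀ i, Hs i u v = 0) (x : V → ℝ) :
    t * (wG u v * (x u - x v) ^ 2) ≤ α * lapQF wG x := by
  have hdel := deleteBefore_apply_of_forall_eq_zero (wG := wG) hout
  calc (t : ℝ) * (wG u v * (x u - x v) ^ 2)
      = ∑ _i : Fin t, wG u v * (x u - x v) ^ 2 := by simp
    _ ≤ ∑ i, α * lapQF (Hs i) x := sum_le_sum fun i _ => by
        simpa only [hdel i] using
          (hB.2.2 i).mul_sq_sub_le (hB.nonneg hG i) (u := u) (v := v) (by rwa [hdel i]) x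
    _ = α * lapQF (∑ i, Hs i) x := by rw [← mul_sum, lapQF_sum]
    _ ≤ α * lapQF wG x := by
        gcongr
        refine lapQF_mono (fun a b => ?_) x
        simpa only [Finset.sum_apply] using hB.sum_apply_le hG a b

end IsBundle

theorem bundle_effRes_bound_general {V : Type*} [Fintype V]
    (wG : V → V → ℝ) (hG : IsWeightedGraph wG)
    (α : ℝ) (hα : 1 ≤ α) {t : ℕ} (ht : 1 ≤ t)
    (Hs : Fin t → V → V → ℝ) (hbundle : IsBundle α wG Hs)
    (u v : V) (he : 0 < wG u v) (hne : ∑ i, Hs i u v = 0) :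
    wG u v * effRes wG u v ≤ α / t := by
  have hnn := hG.2.2
  have hout : ∀ i, Hs i u v = 0 := fun i =>
    (sum_eq_zero_iff_of_nonneg fun j _ => hbundle.nonneg hnn j u v).1 hne i (mem_univ i)
  have htpos : (0 : ℝ) < t := by exact_mod_cast ht
  have hR : effRes wG u v ≤ α / (t * wG u v) := by
    refine effRes_le_of_forall_sq_sub_le (by positivity) fun x => ?_
    rw [div_mul_eq_mul_div, le_div_iff₀ (by positivity)]
    linarith [hbundle.natCast_mul_sq_sub_le hnn (by linarith) he hout x]
  calc wG u v * effRes wG u v ≤ wG u v * (α / (t * wG u v)) := by gcongr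
    _ = α / t := by field_simp

/-- If `H_1, …, H_t` is a `t`-bundle of `α`-spanners of `G` with union `H`, then every
edge `{u,v}` of `G` not in `H` satisfies `w_G(u,v) · R_e[G] ≤ α / t`. -/
theorem bundle_effRes_bound {V : Type*} [Fintype V] [DecidableEq V]
    (wG : V → V → ℝ) (hG : IsWeightedGraph wG) (hn : 2 ≤ Fintype.card V)
    (α : ℝ) (hα : 1 ≤ α) {t : ℕ} (ht : 1 ≤ t)
    (Hs : Fin t → V → V → ℝ) (hbundle : IsBundle α wG Hs)
    (u v : V) (he : 0 < wG u v) (hne : ∑ i, Hs i u v = 0) :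
    wG u v * effRes wG u v ≤ α / t :=
  bundle_effRes_bound_general wG hG α hα ht Hs hbundle u v he hne
end

section
/- (Rayleigh monotonicity) Let G and H be weighted graphs on the same finite vertex set V such that Q_H(x) ≤ Q_G(x) for every x : V → ℝ, and let u and v be distinct vertices that are joined in H by a path all of whose edges have positive weight. Then R_{u,v}[G] ≤ R_{u,v}[H]. -/
/-! For `Q_H x > 0` the ratio `(x u - x v)² / Q_G x` is at most `(x u - x v)² / Q_H x`. The path
`u = f 0, …, f k = v` in `H` handles everything else: telescoping along it and Cauchy–Schwarz give
`(x u - x v)² ≤ C · Q_H x` with `C = 2k Σ 1 / w_H(e)`, which keeps the supremum defining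
`R_{u,v}[H]` finite and forces `x u = x v` whenever `Q_H x = 0`. -/

section

variable {V : Type*} [Fintype V]

lemma mul_sq_sub_le_two_mul_lapQF {w : V → V → ℝ} (hw : ∀ i j, 0 ≤ w i j) (x : V → ℝ) (i j : V) :
    w i j * (x i - x j) ^ 2 ≤ 2 * lapQF w x := by
  have hterm : ∀ a b, 0 ≤ w a b * (x a - x b) ^ 2 := fun a b =>
    mul_nonneg (hw a b) (sq_nonneg _)
  have hrow : w i j * (x i - x j) ^ 2 ≤ ∑ b, w i b * (x i - x b) ^ 2 :=
    Finset.single_le_sum (fun b _ => hterm i b) (Finset.mem_univ j)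
  have hall : ∑ b, w i b * (x i - x b) ^ 2 ≤ ∑ a, ∑ b, w a b * (x a - x b) ^ 2 :=
    Finset.single_le_sum (f := fun a => ∑ b, w a b * (x a - x b) ^ 2)
      (fun a _ => Finset.sum_nonneg fun b _ => hterm a b) (Finset.mem_univ i)
  unfold lapQF
  linarith

lemma Fin.sum_castSucc_sub_succ {M : Type*} [AddCommGroup M] :
    ∀ {k : ℕ} (y : Fin (k + 1) → M),
      ∑ i : Fin k, (y i.castSucc - y i.succ) = y 0 - y (Fin.last k)
  | 0, _ => by simp
  | k + 1, y => by
    rw [Fin.sum_univ_castSucc]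
    have ih := Fin.sum_castSucc_sub_succ (fun i => y i.castSucc)
    simp only [Fin.succ_castSucc, Fin.castSucc_zero] at ih ⊢
    rw [ih, Fin.succ_last]
    abel

lemma sq_sub_le_mul_sum_sq_castSucc_sub_succ {k : ℕ} (y : Fin (k + 1) → ℝ) :
    (y 0 - y (Fin.last k)) ^ 2 ≤ k * ∑ i : Fin k, (y i.castSucc - y i.succ) ^ 2 := by
  have := sq_sum_le_card_mul_sum_sq (s := Finset.univ)
    (f := fun i : Fin k => y i.castSucc - y i.succ)
  rwa [Fin.sum_castSucc_sub_succ, Finset.card_univ, Fintype.card_fin] at this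

lemma sq_sub_le_mul_lapQF_of_walk {w : V → V → ℝ} (hw : ∀ i j, 0 ≤ w i j) {k : ℕ}
    {f : Fin (k + 1) → V} (hf : ∀ i : Fin k, 0 < w (f i.castSucc) (f i.succ)) (x : V → ℝ) :
    (x (f 0) - x (f (Fin.last k))) ^ 2
      ≤ (2 * k * ∑ i : Fin k, (w (f i.castSucc) (f i.succ))⁻¹) * lapQF w x := by
  have hedge : ∀ i : Fin k, (x (f i.castSucc) - x (f i.succ)) ^ 2
      ≤ 2 * lapQF w x * (w (f i.castSucc) (f i.succ))⁻¹ := by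
    intro i
    rw [← div_eq_mul_inv, le_div_iff₀ (hf i), mul_comm]
    exact mul_sq_sub_le_two_mul_lapQF hw x _ _
  calc (x (f 0) - x (f (Fin.last k))) ^ 2
      ≤ k * ∑ i : Fin k, (x (f i.castSucc) - x (f i.succ)) ^ 2 :=
        sq_sub_le_mul_sum_sq_castSucc_sub_succ (x ∘ f)
    _ ≤ k * ∑ i : Fin k, 2 * lapQF w x * (w (f i.castSucc) (f i.succ))⁻¹ := by
        gcongr with i; exact hedge i
    _ = (2 * k * ∑ i : Fin k, (w (f i.castSucc) (f i.succ))⁻¹) * lapQF w x := by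
        rw [← Finset.mul_sum]; ring

lemma effRes_nonneg (w : V → V → ℝ) (u v : V) : 0 ≤ effRes w u v :=
  Real.sSup_nonneg fun _ ⟨_, hx, hr⟩ => hr ▸ div_nonneg (sq_nonneg _) hx.le

lemma div_lapQF_le_effRes {w : V → V → ℝ} {u v : V} {C : ℝ}
    (hC : ∀ x, (x u - x v) ^ 2 ≤ C * lapQF w x) {x : V → ℝ} (hx : 0 < lapQF w x) :
    (x u - x v) ^ 2 / lapQF w x ≤ effRes w u v := by
  refine le_csSup ⟨C, ?_⟩ ⟨x, hx, rfl⟩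
  rintro _ ⟨y, hy, rfl⟩
  exact (div_le_iff₀ hy).2 (hC y)

lemma effRes_le_effRes_of_lapQF_le {wG wH : V → V → ℝ} {u v : V}
    (hle : ∀ x, lapQF wH x ≤ lapQF wG x) {C : ℝ} (hC₀ : 0 ≤ C)
    (hC : ∀ x, (x u - x v) ^ 2 ≤ C * lapQF wH x) :
    effRes wG u v ≤ effRes wH u v := by
  refine Real.sSup_le ?_ (effRes_nonneg wH u v)
  rintro _ ⟨x, -, rfl⟩
  rcases le_or_gt (lapQF wH x) 0 with hxH | hxH
  · have hxuv : (x u - x v) ^ 2 = 0 :=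
      le_antisymm ((hC x).trans (mul_nonpos_of_nonneg_of_nonpos hC₀ hxH)) (sq_nonneg _)
    rw [hxuv, zero_div]
    exact effRes_nonneg wH u v
  · exact (div_le_div_of_nonneg_left (sq_nonneg _) hxH (hle x)).trans
      (div_lapQF_le_effRes hC hxH)

end

theorem rayleigh_monotonicity_general {V : Type*} [Fintype V]
    (wG wH : V → V → ℝ) (hH : IsWeightedGraph wH)
    (hle : ∀ x : V → ℝ, lapQF wH x ≤ lapQF wG x)
    (u v : V)
    (k : ℕ) (f : Fin (k + 1) → V) (hp : IsPathIn wH u v k f) :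
    effRes wG u v ≤ effRes wH u v := by
  obtain ⟨-, -, hHnn⟩ := hH
  obtain ⟨rfl, rfl, -, hedge⟩ := hp
  refine effRes_le_effRes_of_lapQF_le hle ?_ (sq_sub_le_mul_lapQF_of_walk hHnn hedge)
  exact mul_nonneg (by positivity) (Finset.sum_nonneg fun i _ => inv_nonneg.2 (hedge i).le)

/-- Rayleigh monotonicity: if `Q_H ≤ Q_G` pointwise and `u ≠ v` are joined in `H` by a
path with positive-weight edges, then `R_{u,v}[G] ≤ R_{u,v}[H]`. -/
theorem rayleigh_monotonicity {V : Type*} [Fintype V] [DecidableEq V]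
    (wG wH : V → V → ℝ) (hG : IsWeightedGraph wG) (hH : IsWeightedGraph wH)
    (hle : ∀ x : V → ℝ, lapQF wH x ≤ lapQF wG x)
    (u v : V) (huv : u ≠ v)
    (k : ℕ) (f : Fin (k + 1) → V) (hp : IsPathIn wH u v k f) :
    effRes wG u v ≤ effRes wH u v :=
  rayleigh_monotonicity_general wG wH hH hle u v k f hp
end
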